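/- arXiv:1910.09897 — 2 statements merged into one kernel-verified Lean document; each statement's English description precedes it below -/
import Mathlib

section
/- The bilinear form (x, x′) ↦ ⟨R(T x), x′⟩ on X × X′ descends to a well-defined bilinear pairing ⟨·,·⟩₂ on (X/ker T) × (X′/ker R′): its value depends only on the class π_s(x) of x modulo ker T and the class π′_t(x′) of x′ modulo ker R′; the induced pairing satisfies ⟨π_s(x), π′_t(x′)⟩₂ = ⟨R(Tx), x′⟩ = ⟨x, T′(R′x′)⟩ for all x ∈ X, x′ ∈ X′; and ⟨·,·⟩₂ is non-degenerate, i.e. if ⟨u, v′⟩₂ = 0 for all v′ ∈ X′/ker R′ then u = 0, and if ⟨u, v′⟩₂ = 0 for all u ∈ X/ker T then v′ = 0. -/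
/-- The bilinear form (x, x′) ↦ ⟨R(T x), x′⟩ descends to a well-defined,
non-degenerate bilinear pairing on (X/ker T) × (X′/ker R′) satisfying
⟨π_s(x), π′_t(x′)⟩₂ = ⟨R(Tx), x′⟩ = ⟨x, T′(R′x′)⟩. -/
theorem stmt2 (X X' : Type*) [AddCommGroup X] [Module ℂ X]
    [AddCommGroup X'] [Module ℂ X']
    (p : X →ₗ[ℂ] X' →ₗ[ℂ] ℂ)
    (hnd₁ : ∀ x : X, (∀ x' : X', p x x' = 0) → x = 0)
    (hnd₂ : ∀ x' : X', (∀ x : X, p x x' = 0) → x' = 0)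
    (T R : X →ₗ[ℂ] X) (T' R' : X' →ₗ[ℂ] X')
    (hTRT : ∀ x, T (R (T x)) = T x) (hRTR : ∀ x, R (T (R x)) = R x)
    (hT'R'T' : ∀ x', T' (R' (T' x')) = T' x')
    (hR'T'R' : ∀ x', R' (T' (R' x')) = R' x')
    (hadjT : ∀ x x', p (T x) x' = p x (T' x'))
    (hadjR : ∀ x x', p (R x) x' = p x (R' x')) :
    ∃ B : (X ⧸ LinearMap.ker T) →ₗ[ℂ] (X' ⧸ LinearMap.ker R') →ₗ[ℂ] ℂ,
      (∀ (x : X) (x' : X'),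
        B ((LinearMap.ker T).mkQ x) ((LinearMap.ker R').mkQ x') = p (R (T x)) x' ∧
        p (R (T x)) x' = p x (T' (R' x'))) ∧
      (∀ u : X ⧸ LinearMap.ker T, (∀ v' : X' ⧸ LinearMap.ker R', B u v' = 0) → u = 0) ∧
      (∀ v' : X' ⧸ LinearMap.ker R', (∀ u : X ⧸ LinearMap.ker T, B u v' = 0) → v' = 0) := by
  have hq2 : ∀ (x : X) (x' : X'), p (R (T x)) x' = p x (T' (R' x')) := by
    intro x x'
    exact (hadjR (T x) x').trans (hadjT x (R' x'))
  set q : X →ₗ[ℂ] X' →ₗ[ℂ] ℂ := p ∘ₗ (R ∘ₗ T) with hq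
  have h₂ : LinearMap.ker R' ≤ LinearMap.ker q.flip := by
    intro x' hx'
    have hx'0 : R' x' = 0 := hx'
    ext x
    show p (R (T x)) x' = 0
    rw [hq2, hx'0, map_zero, map_zero]
  set B₁ : (X' ⧸ LinearMap.ker R') →ₗ[ℂ] X →ₗ[ℂ] ℂ :=
    (LinearMap.ker R').liftQ q.flip h₂ with hB₁
  have hB₁app : ∀ (x : X) (x' : X'), B₁ ((LinearMap.ker R').mkQ x') x = p (R (T x)) x' :=
    fun _ _ => rfl
  have h₁ : LinearMap.ker T ≤ LinearMap.ker B₁.flip := by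
    intro x hx
    have hx0 : T x = 0 := hx
    have : B₁.flip x = 0 := by
      apply Submodule.linearMap_qext
      ext x'
      show p (R (T x)) x' = 0
      rw [hx0, map_zero, map_zero, LinearMap.zero_apply]
    exact this
  refine ⟨(LinearMap.ker T).liftQ B₁.flip h₁, ?_, ?_, ?_⟩
  · intro x x'
    exact ⟨rfl, hq2 x x'⟩
  · intro u hu
    induction u using Submodule.Quotient.induction_on with
    | H x =>
      have hall : ∀ x', p (R (T x)) x' = 0 := fun x' => hu ((LinearMap.ker R').mkQ x')
      have hRT0 : R (T x) = 0 := hnd₁ _ hall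
      have hT0 : T x = 0 := by rw [← hTRT x, hRT0, map_zero]
      simpa [Submodule.Quotient.mk_eq_zero] using hT0
  · intro v' hv'
    induction v' using Submodule.Quotient.induction_on with
    | H x' =>
      have hall : ∀ x, p x (T' (R' x')) = 0 := by
        intro x
        rw [← hq2 x x']
        exact hv' ((LinearMap.ker T).mkQ x)
      have hTR0 : T' (R' x') = 0 := hnd₂ _ hall
      have hR0 : R' x' = 0 := by rw [← hR'T'R' x', hTR0, map_zero]
      simpa [Submodule.Quotient.mk_eq_zero] using hR0
end

section
/- Let B be a finite-dimensional associative ℂ-algebra and μ : B → ℂ a faithful linear functional. Then there exists a unique map σ : B → B satisfying μ(x y) = μ(y σ(x)) for all x, y ∈ B; moreover σ is a bijective linear map and is multiplicative: σ(x y) = σ(x) σ(y) for all x, y ∈ B. -/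
open Module in
/-- Let B be a finite-dimensional associative ℂ-algebra with a faithful linear
functional μ. Then there is a unique map σ : B → B with μ(xy) = μ(y σ(x)) for
all x, y; moreover σ is a bijective linear map and σ(xy) = σ(x)σ(y). -/
theorem stmt9 (B : Type*) [NonUnitalRing B] [Module ℂ B]
    [SMulCommClass ℂ B B] [IsScalarTower ℂ B B] [FiniteDimensional ℂ B]
    (μ : B →ₗ[ℂ] ℂ)
    (hfaith₁ : ∀ b : B, (∀ x : B, μ (x * b) = 0) → b = 0)
    (hfaith₂ : ∀ b : B, (∀ x : B, μ (b * x) = 0) → b = 0) :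
    ∃ σ : B → B,
      (∀ x y : B, μ (x * y) = μ (y * σ x)) ∧
      Function.Bijective σ ∧
      IsLinearMap ℂ σ ∧
      (∀ x y : B, σ (x * y) = σ x * σ y) ∧
      (∀ σ' : B → B, (∀ x y : B, μ (x * y) = μ (y * σ' x)) → σ' = σ) := by
  -- F x : y ↦ μ (x * y),  G x : y ↦ μ (y * x)
  set F : B →ₗ[ℂ] Module.Dual ℂ B :=
    { toFun := fun x => μ ∘ₗ LinearMap.mulLeft ℂ x
      map_add' := by intro a b; ext y; simp [add_mul]
      map_smul' := by intro c a; ext y; simp [smul_mul_assoc] } with hF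
  set G : B →ₗ[ℂ] Module.Dual ℂ B :=
    { toFun := fun x => μ ∘ₗ LinearMap.mulRight ℂ x
      map_add' := by intro a b; ext y; simp [mul_add]
      map_smul' := by intro c a; ext y; simp [mul_smul_comm] } with hG
  have hGval : ∀ x y : B, G x y = μ (y * x) := fun x y => rfl
  have hFval : ∀ x y : B, F x y = μ (x * y) := fun x y => rfl
  have hGinj : Function.Injective G := by
    rw [injective_iff_map_eq_zero]
    intro b hb
    exact hfaith₁ b fun x => by simpa [hGval] using congrFun (congrArg DFunLike.coe hb) x
  have hFinj : Function.Injective F := by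
    rw [injective_iff_map_eq_zero]
    intro b hb
    exact hfaith₂ b fun x => by simpa [hFval] using congrFun (congrArg DFunLike.coe hb) x
  have hdim : finrank ℂ B = finrank ℂ (Module.Dual ℂ B) :=
    (Subspace.dual_finrank_eq).symm
  have hGbij : Function.Bijective G :=
    ⟨hGinj, (LinearMap.injective_iff_surjective_of_finrank_eq_finrank hdim).mp hGinj⟩
  have hFbij : Function.Bijective F :=
    ⟨hFinj, (LinearMap.injective_iff_surjective_of_finrank_eq_finrank hdim).mp hFinj⟩
  let eG : B ≃ₗ[ℂ] Module.Dual ℂ B := LinearEquiv.ofBijective G hGbij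
  let σL : B →ₗ[ℂ] B := (eG.symm : Module.Dual ℂ B →ₗ[ℂ] B) ∘ₗ F
  have key : ∀ x y : B, μ (x * y) = μ (y * σL x) := by
    intro x y
    have : G (σL x) = F x := by
      show eG (eG.symm (F x)) = F x
      simp
    have := congrFun (congrArg DFunLike.coe this) y
    rw [hGval, hFval] at this
    exact this.symm
  -- uniqueness as functions agreeing pointwise
  have unique_pt : ∀ (s t : B → B), (∀ x y, μ (x * y) = μ (y * s x)) →
      (∀ x y, μ (x * y) = μ (y * t x)) → s = t := by
    intro s t hs ht
    funext x
    have h : ∀ y, μ (y * (s x - t x)) = 0 := by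
      intro y
      have := (hs x y).symm.trans (ht x y)
      simp [mul_sub, this]
    have := hfaith₁ (s x - t x) h
    exact sub_eq_zero.mp this
  refine ⟨σL, key, ?_, ?_, ?_, ?_⟩
  · have : Function.Bijective (eG.symm : Module.Dual ℂ B → B) := eG.symm.bijective
    exact this.comp hFbij
  · exact ⟨σL.map_add, σL.map_smul⟩
  · intro x y
    have h : ∀ z, μ (z * (σL (x * y) - σL x * σL y)) = 0 := by
      intro z
      have h1 : μ ((x * y) * z) = μ (z * σL (x * y)) := key (x * y) z
      have h2 : μ ((x * y) * z) = μ (z * (σL x * σL y)) := by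
        calc μ ((x * y) * z) = μ (x * (y * z)) := by rw [mul_assoc]
          _ = μ ((y * z) * σL x) := key x (y * z)
          _ = μ (y * (z * σL x)) := by rw [mul_assoc]
          _ = μ ((z * σL x) * σL y) := key y (z * σL x)
          _ = μ (z * (σL x * σL y)) := by rw [mul_assoc]
      simp [mul_sub, ← h1, ← h2]
    have := hfaith₁ _ h
    exact sub_eq_zero.mp this
  · intro σ' hσ'
    exact unique_pt σ' σL hσ' key
end
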